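/- For every natural number t there exists a group model 𝔊 such that tw(I(𝔊)) − tw(B(𝔊)) = t. In particular, for 𝔊 = {G_i : i ∈ [t+2]} with G_i = {i, t+3}, the incidence graph B(𝔊) is a tree (so tw(B(𝔊)) = 1) while the intersection graph I(𝔊) is a clique on t+2 vertices (so tw(I(𝔊)) = t+1). -/

import Mathlib

/-!
All groups of the star model contain the common element `t + 3`, so its intersection graph is the complete
graph on `t + 2` vertices. Subtrees of a tree have the Helly property, hence every tree
decomposition has a bag containing a whole clique, and `K_{t+2}` has treewidth exactly `t + 1`.
The incidence graph is a spider (the hub joined to every group, each group carrying one private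
element): it is connected with one edge fewer than vertices, hence a tree. Rooting a tree and
taking the bags `{x, parent x}` shows that trees have treewidth at most one, and any edge forces
treewidth at least one.
-/

open SimpleGraph

/-- A tree decomposition of a graph `G` with index type `ι`. -/
structure TreeDecomp {V : Type} (G : SimpleGraph V) (ι : Type) where
  tree : SimpleGraph ι
  isTree : tree.IsTree
  bag : ι → Set V
  covers : ∀ v : V, ∃ x : ι, v ∈ bag x
  coversEdge : ∀ ⦃u v : V⦄, G.Adj u v → ∃ x : ι, u ∈ bag x ∧ v ∈ bag x
  subtree : ∀ v : V, (tree.induce {x : ι | v ∈ bag x}).Connected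

/-- The treewidth of a graph. -/
noncomputable def treewidth {V : Type} (G : SimpleGraph V) : ℕ :=
  sInf {n : ℕ | ∃ (ι : Type) (d : TreeDecomp G ι),
    ∀ x : ι, ∃ s : Finset V, ↑s = d.bag x ∧ s.card ≤ n + 1}

/-- The intersection graph of a group model. -/
def intersectionGraph {N M : ℕ} (Gr : Fin M → Finset (Fin N)) : SimpleGraph (Fin M) :=
  SimpleGraph.fromRel (fun a b => (Gr a ∩ Gr b).Nonempty)

/-- The incidence graph of a group model. -/
def incidenceGraph {N M : ℕ} (Gr : Fin M → Finset (Fin N)) :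
    SimpleGraph (Fin N ⊕ Fin M) :=
  SimpleGraph.fromRel (fun a b =>
    match a, b with
    | Sum.inl e, Sum.inr g => e ∈ Gr g
    | _, _ => False)

/-- The "star" group model on ground set `[t+3]` with groups `G_i = {i, t+3}`
(in 0-indexed terms `{i, t+2}`), `i ∈ [t+2]`. -/
def starModel (t : ℕ) : Fin (t + 2) → Finset (Fin (t + 3)) :=
  fun i => {Fin.castLE (by omega) i, ⟨t + 2, by omega⟩}

namespace SimpleGraph

variable {ι : Type} {T : SimpleGraph ι}

def IsPathConvex (T : SimpleGraph ι) (S : Set ι) : Prop :=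
  ∀ ⦃a b : ι⦄ (p : T.Walk a b), p.IsPath → a ∈ S → b ∈ S → ∀ x ∈ p.support, x ∈ S

lemma isPathConvex_univ : T.IsPathConvex Set.univ := fun _ _ _ _ _ _ _ _ => trivial

lemma IsPathConvex.inter {A B : Set ι} (hA : T.IsPathConvex A) (hB : T.IsPathConvex B) :
    T.IsPathConvex (A ∩ B) :=
  fun _ _ p hp ha hb x hx => ⟨hA p hp ha.1 hb.1 x hx, hB p hp ha.2 hb.2 x hx⟩

lemma IsAcyclic.isPathConvex_of_preconnected_induce (hT : T.IsAcyclic) {S : Set ι}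
    (hS : (T.induce S).Preconnected) : T.IsPathConvex S := by
  classical
  intro a b p hp ha hb
  obtain ⟨w⟩ := hS ⟨a, ha⟩ ⟨b, hb⟩
  let w' := w.map (Embedding.induce S).toHom
  have hw' : ∀ x ∈ w'.support, x ∈ S := by
    simp only [w', Walk.support_map, List.mem_map]
    rintro _ ⟨x, -, rfl⟩
    exact x.2
  have hpw : p = w'.bypass :=
    congrArg Subtype.val (hT.subsingleton_path a b |>.elim ⟨p, hp⟩ ⟨_, w'.bypass_isPath⟩)
  rw [hpw]
  exact fun x hx => hw' x (w'.support_bypass_subset_support hx)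

lemma IsTree.inter_inter_nonempty (hT : T.IsTree) {A B C : Set ι} (hA : T.IsPathConvex A)
    (hB : T.IsPathConvex B) (hC : T.IsPathConvex C) (hAB : (A ∩ B).Nonempty)
    (hBC : (B ∩ C).Nonempty) (hAC : (A ∩ C).Nonempty) : (A ∩ B ∩ C).Nonempty := by
  obtain ⟨a, haA, haB⟩ := hAB
  obtain ⟨b, hbB, hbC⟩ := hBC
  obtain ⟨c, hcA, hcC⟩ := hAC
  classical
  by_contra! hempty
  have hABC : ∀ x ∈ A, x ∈ B → x ∉ C := fun x hxA hxB hxC =>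
    (Set.eq_empty_iff_forall_notMem.1 hempty) x ⟨⟨hxA, hxB⟩, hxC⟩
  obtain ⟨q, hq⟩ := (hT.connected a b).exists_isPath
  obtain ⟨r, hr⟩ := (hT.connected b c).exists_isPath
  let p := (q.append r).bypass
  have hpA : ∀ x ∈ p.support, x ∈ A := hA p (q.append r).bypass_isPath haA hcA
  have hpBC : ∀ x ∈ p.support, x ∈ B ∨ x ∈ C := fun x hx => by
    have := (q.append r).support_bypass_subset_support hx
    rw [Walk.mem_support_append_iff] at this
    exact this.imp (hB q hq haB hbB x) (hC r hr hbC hcC x)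
  obtain ⟨d, hd, hmB, hxB⟩ :=
    p.exists_boundary_dart B haB fun hcB => hABC c hcA hcB hcC
  have hxC : d.snd ∈ C :=
    (hpBC _ (p.dart_snd_mem_support_of_mem_darts hd)).resolve_left hxB
  have hmC : d.fst ∉ C := hABC _ (hpA _ (p.dart_fst_mem_support_of_mem_darts hd)) hmB
  obtain ⟨s, hs⟩ := (hT.connected b d.snd).exists_isPath
  obtain ⟨s', hs'⟩ := (hT.connected b d.fst).exists_isPath
  -- `p` runs inside `A ∩ (B ∪ C)` from `B` to `C`; it leaves `B` along an edge `d` with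
  -- `d.fst ∈ B \ C` and `d.snd ∈ C \ B`. The `B`-path from `b` to `d.fst` avoids `d.snd`,
  -- so in the tree the `C`-path from `b` to `d.snd` must run through `d.fst`.
  exact hmC <| hC s hs hbC hxC _ <| hT.isAcyclic.mem_support_of_ne_mem_support_of_adj_of_isPath
    hs hs' d.adj.symm fun hx => hxB (hB s' hs' hbB hmB _ hx)

lemma IsTree.inter_biInter_nonempty (hT : T.IsTree) {α : Type*} (s : Finset α)
    {f : α → Set ι} (hf : ∀ i ∈ s, T.IsPathConvex (f i))
    (hs : ∀ i ∈ s, ∀ j ∈ s, (f i ∩ f j).Nonempty) {A : Set ι} (hA : T.IsPathConvex A)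
    (hAne : A.Nonempty) (hAf : ∀ i ∈ s, (A ∩ f i).Nonempty) :
    (A ∩ ⋂ i ∈ s, f i).Nonempty := by
  classical
  induction s using Finset.induction_on generalizing A with
  | empty => simpa using hAne
  | insert j s _ ih =>
    simp only [Finset.mem_insert, forall_eq_or_imp] at hf hs hAf
    rw [Finset.set_biInter_insert, ← Set.inter_assoc]
    exact ih hf.2 (fun i hi k hk => (hs.2 i hi).2 k hk) (hA.inter hf.1) hAf.1
      fun i hi => hT.inter_inter_nonempty hA hf.1 (hf.2 i hi) hAf.1 (hs.1.2 i hi) (hAf.2 i hi)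

lemma IsTree.biInter_nonempty (hT : T.IsTree) {α : Type*} (s : Finset α)
    {f : α → Set ι} (hf : ∀ i ∈ s, T.IsPathConvex (f i))
    (hs : ∀ i ∈ s, ∀ j ∈ s, (f i ∩ f j).Nonempty) : (⋂ i ∈ s, f i).Nonempty := by
  have := hT.connected.nonempty
  simpa using hT.inter_biInter_nonempty s hf hs isPathConvex_univ Set.univ_nonempty
    fun i hi => by simpa using (hs i hi i hi).left

end SimpleGraph

section TreeDecomposition

variable {V : Type} {G : SimpleGraph V}

lemma treewidth_le_of_treeDecomp {ι : Type} (d : TreeDecomp G ι) {n : ℕ}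
    (hd : ∀ x, ∃ s : Finset V, ↑s = d.bag x ∧ s.card ≤ n + 1) : treewidth G ≤ n :=
  Nat.sInf_le ⟨ι, d, hd⟩

def TreeDecomp.oneBag (G : SimpleGraph V) : TreeDecomp G Unit where
  tree := ⊥
  isTree := .of_subsingleton
  bag _ := Set.univ
  covers _ := ⟨(), trivial⟩
  coversEdge _ _ _ := ⟨(), trivial, trivial⟩
  subtree v := (@IsTree.of_subsingleton _ ⟨⟨(), Set.mem_univ v⟩⟩ _ _).connected

lemma treewidth_le_card_sub_one [Fintype V] (G : SimpleGraph V) :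
    treewidth G ≤ Fintype.card V - 1 :=
  treewidth_le_of_treeDecomp (.oneBag G) fun _ =>
    ⟨Finset.univ, Finset.coe_univ, by rw [Finset.card_univ]; omega⟩

-- Finiteness matters: with no decomposition into finite bags, `treewidth G = sInf ∅ = 0`.
lemma exists_treeDecomp_card_bag_le_treewidth_add_one [Finite V] (G : SimpleGraph V) :
    ∃ (ι : Type) (d : TreeDecomp G ι),
      ∀ x, ∃ s : Finset V, ↑s = d.bag x ∧ s.card ≤ treewidth G + 1 := by
  have := Fintype.ofFinite V
  have hne : {n : ℕ | ∃ (ι : Type) (d : TreeDecomp G ι),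
      ∀ x, ∃ s : Finset V, ↑s = d.bag x ∧ s.card ≤ n + 1}.Nonempty :=
    ⟨Fintype.card V, Unit, .oneBag G, fun _ => ⟨Finset.univ, Finset.coe_univ, Nat.le_succ _⟩⟩
  exact Nat.sInf_mem hne

lemma TreeDecomp.exists_subset_bag_of_isClique {ι : Type} (d : TreeDecomp G ι) {s : Finset V}
    (hs : G.IsClique (s : Set V)) : ∃ x, ↑s ⊆ d.bag x := by
  have hconvex : ∀ v ∈ s, d.tree.IsPathConvex {x | v ∈ d.bag x} := fun v _ =>
    d.isTree.isAcyclic.isPathConvex_of_preconnected_induce (d.subtree v).preconnected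
  have hmeet : ∀ v ∈ s, ∀ w ∈ s, ({x | v ∈ d.bag x} ∩ {x | w ∈ d.bag x}).Nonempty := by
    intro v hv w hw
    obtain rfl | hvw := eq_or_ne v w
    · obtain ⟨x, hx⟩ := d.covers v
      exact ⟨x, hx, hx⟩
    · exact d.coversEdge (hs hv hw hvw)
  obtain ⟨x, hx⟩ := d.isTree.biInter_nonempty s hconvex hmeet
  exact ⟨x, fun v hv => Set.mem_iInter₂.1 hx v hv⟩

lemma SimpleGraph.IsClique.card_le_treewidth_add_one [Finite V] {s : Finset V}
    (hs : G.IsClique (s : Set V)) : s.card ≤ treewidth G + 1 := by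
  obtain ⟨ι, d, hd⟩ := exists_treeDecomp_card_bag_le_treewidth_add_one G
  obtain ⟨x, hx⟩ := d.exists_subset_bag_of_isClique hs
  obtain ⟨b, hb, hcard⟩ := hd x
  exact (Finset.card_le_card (by rwa [← Finset.coe_subset, hb])).trans hcard

lemma treewidth_top [Fintype V] : treewidth (⊤ : SimpleGraph V) = Fintype.card V - 1 := by
  have hclique : (⊤ : SimpleGraph V).IsClique (Finset.univ : Finset V) := by simp
  have := hclique.card_le_treewidth_add_one
  rw [Finset.card_univ] at this
  exact le_antisymm (treewidth_le_card_sub_one ⊤) (by omega)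

lemma one_le_treewidth_of_adj [Finite V] {u v : V} (h : G.Adj u v) : 1 ≤ treewidth G := by
  classical
  have hclique : G.IsClique ({u, v} : Finset V) := by simpa [isClique_pair] using fun _ => h
  have := hclique.card_le_treewidth_add_one
  rw [Finset.card_pair h.ne] at this
  omega

end TreeDecomposition

namespace SimpleGraph.IsTree

variable {V : Type} {T : SimpleGraph V} (hT : T.IsTree) (r : V)

noncomputable def pathTo (x : V) : T.Path x r :=
  ⟨_, (hT.connected x r).exists_isPath.choose_spec⟩

noncomputable def parent (x : V) : V :=
  (hT.pathTo r x : T.Walk x r).snd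

lemma parent_self : hT.parent r r = r := by
  rw [parent, (hT.pathTo r r).loop_eq]
  rfl

lemma adj_parent {x : V} (hx : x ≠ r) : T.Adj x (hT.parent r x) :=
  Walk.adj_snd (Walk.not_nil_of_ne hx)

lemma parent_eq_or_parent_eq {u v : V} (h : T.Adj u v) :
    hT.parent r u = v ∨ hT.parent r v = u := by
  classical
  let p := hT.pathTo r u
  by_cases hv : v ∈ (p : T.Walk u r).support
  · exact Or.inl (hT.isAcyclic.eq_snd_of_adj_start p.2 h hv).symm
  · right
    have hp : (Walk.cons h.symm (p : T.Walk u r)).IsPath := p.2.cons hv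
    have := hT.isAcyclic.subsingleton_path v r |>.elim (hT.pathTo r v) ⟨_, hp⟩
    rw [parent, this]
    exact Walk.snd_cons _ _

noncomputable def treeDecomp : TreeDecomp T V where
  tree := T
  isTree := hT
  bag x := {x, hT.parent r x}
  covers v := ⟨v, Or.inl rfl⟩
  coversEdge u v h := (hT.parent_eq_or_parent_eq r h).elim
    (fun hu => ⟨u, Or.inl rfl, Or.inr hu.symm⟩) (fun hv => ⟨v, Or.inr hv.symm, Or.inl rfl⟩)
  subtree v := by
    refine (connected_iff_exists_forall_reachable _).2 ⟨⟨v, Or.inl rfl⟩, fun ⟨x, hx⟩ => ?_⟩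
    obtain rfl | hxv := eq_or_ne v x
    · rfl
    have hvx : v = hT.parent r x := hx.resolve_left hxv
    have hxr : x ≠ r := fun hxr => hxv (by subst hxr; rwa [parent_self] at hvx)
    exact Adj.reachable (by simpa [hvx] using (hT.adj_parent r hxr).symm)

include hT in
lemma treewidth_le_one : treewidth T ≤ 1 := by
  classical
  obtain ⟨r⟩ := hT.connected.nonempty
  exact treewidth_le_of_treeDecomp (hT.treeDecomp r) fun x =>
    ⟨{x, hT.parent r x}, by simp [treeDecomp], Finset.card_le_two⟩

end SimpleGraph.IsTree

section IncidenceGraph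

variable {N M : ℕ} (Gr : Fin M → Finset (Fin N))

@[simp]
lemma incidenceGraph_adj_inl_inr {e : Fin N} {g : Fin M} :
    (incidenceGraph Gr).Adj (.inl e) (.inr g) ↔ e ∈ Gr g := by
  simp [incidenceGraph]

@[simp]
lemma incidenceGraph_adj_inr_inl {e : Fin N} {g : Fin M} :
    (incidenceGraph Gr).Adj (.inr g) (.inl e) ↔ e ∈ Gr g := by
  simp [incidenceGraph]

@[simp]
lemma not_incidenceGraph_adj_inl_inl {e e' : Fin N} :
    ¬ (incidenceGraph Gr).Adj (.inl e) (.inl e') := by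
  simp [incidenceGraph]

@[simp]
lemma not_incidenceGraph_adj_inr_inr {g g' : Fin M} :
    ¬ (incidenceGraph Gr).Adj (.inr g) (.inr g') := by
  simp [incidenceGraph]

lemma card_edgeSet_incidenceGraph :
    Nat.card (incidenceGraph Gr).edgeSet = ∑ g, (Gr g).card := by
  let f : (Σ g, Gr g) → (incidenceGraph Gr).edgeSet :=
    fun p => ⟨s(.inl p.2, .inr p.1), by simp⟩
  have hf : Function.Bijective f := by
    constructor
    · rintro ⟨g, e, he⟩ ⟨g', e', he'⟩ h
      simp only [f, Subtype.mk.injEq, Sym2.eq_iff, Sum.inl.injEq, Sum.inr.injEq,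
        reduceCtorEq, and_false, or_false] at h
      obtain ⟨rfl, rfl⟩ := h
      rfl
    · rintro ⟨e, he⟩
      induction e using Sym2.ind with
      | h a b =>
        rcases a with e | g <;> rcases b with e' | g' <;> simp at he
        · exact ⟨⟨g', e, he⟩, rfl⟩
        · exact ⟨⟨g, e', he⟩, Subtype.ext Sym2.eq_swap⟩
  rw [← Nat.card_eq_of_bijective f hf, Nat.card_sigma]
  simp

end IncidenceGraph

section StarModel

variable (t : ℕ)

lemma last_mem_starModel (i : Fin (t + 2)) : Fin.last (t + 2) ∈ starModel t i := by
  simp [starModel, Fin.last]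

lemma card_starModel (i : Fin (t + 2)) : (starModel t i).card = 2 :=
  Finset.card_pair (Fin.ne_of_val_ne i.is_lt.ne)

lemma intersectionGraph_starModel : intersectionGraph (starModel t) = ⊤ := by
  ext i j
  simp only [intersectionGraph, fromRel_adj, top_adj, and_iff_left_iff_imp]
  exact fun _ => Or.inl ⟨_, Finset.mem_inter.2 ⟨last_mem_starModel t i, last_mem_starModel t j⟩⟩

lemma connected_incidenceGraph_starModel : (incidenceGraph (starModel t)).Connected := by
  have hgroup (g : Fin (t + 2)) :
      (incidenceGraph (starModel t)).Reachable (.inl (Fin.last _)) (.inr g) :=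
    Adj.reachable (by simpa using last_mem_starModel t g)
  refine (connected_iff_exists_forall_reachable _).2 ⟨.inl (Fin.last _), ?_⟩
  rintro (e | g)
  · obtain rfl | he := eq_or_ne e (Fin.last _)
    · rfl
    · exact (hgroup (e.castLT (Fin.val_lt_last he))).trans
        (Adj.reachable (by simp [starModel, Fin.ext_iff]))
  · exact hgroup g

lemma isTree_incidenceGraph_starModel : (incidenceGraph (starModel t)).IsTree := by
  rw [isTree_iff_connected_and_card, card_edgeSet_incidenceGraph]
  refine ⟨connected_incidenceGraph_starModel t, ?_⟩
  simp only [card_starModel, Finset.sum_const, Finset.card_univ, Fintype.card_fin, smul_eq_mul,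
    Nat.card_eq_fintype_card, Fintype.card_sum]
  ring

end StarModel

/-- for every `t` there is a group model whose incidence graph has
treewidth `1` while its intersection graph has treewidth `t + 1`; in particular the
difference of the two treewidths is exactly `t`. -/
theorem treewidth_gap_example (t : ℕ) :
    treewidth (incidenceGraph (starModel t)) = 1 ∧
    treewidth (intersectionGraph (starModel t)) = t + 1 ∧
    treewidth (intersectionGraph (starModel t)) -
      treewidth (incidenceGraph (starModel t)) = t := by
  have hB : treewidth (incidenceGraph (starModel t)) = 1 :=
    le_antisymm (isTree_incidenceGraph_starModel t).treewidth_le_one <|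
      one_le_treewidth_of_adj (u := .inl (Fin.last _)) (v := .inr 0)
        (by simpa using last_mem_starModel t 0)
  have hI : treewidth (intersectionGraph (starModel t)) = t + 1 := by
    rw [intersectionGraph_starModel, treewidth_top, Fintype.card_fin]
    rfl
  exact ⟨hB, hI, by omega⟩
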